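/- arXiv:1206.0771 — 4 statements merged into one kernel-verified Lean document; each statement's English description precedes it below -/
import Mathlib

section
/- The intersection of two pinch convex vertex sets is pinch convex. -/
open Finset

variable {V : Type*} [Fintype V] [DecidableEq V]

/-- The total weight of the boundary of `A`: the sum of the weights of the
edges with exactly one endpoint in `A`. -/
def boundarySize (w : V → V → ℝ) (A : Finset V) : ℝ :=
  ∑ u ∈ A, ∑ x ∈ Aᶜ, w u x

/-- The pinchSlope of a vertex `v` with respect to a vertex set `A`: the total
weight of the edges from `v` to the complement of `A` minus the total weight
of the edges from `v` to `A`. -/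
def pinchSlope (w : V → V → ℝ) (A : Finset V) (v : V) : ℝ :=
  ∑ x ∈ Aᶜ, w v x - ∑ x ∈ A, w v x

/-- `A` is pinch convex: for any sequence of vertices outside of `A`, if adding
all of them to `A` strictly decreases the boundary, then adding some proper
initial segment strictly increases the boundary. -/
def PinchConvex (w : V → V → ℝ) (A : Finset V) : Prop :=
  ∀ L : List V, (∀ x ∈ L, x ∉ A) →
    boundarySize w (A ∪ L.toFinset) < boundarySize w A →
    ∃ k < L.length, boundarySize w A < boundarySize w (A ∪ (L.take k).toFinset)

/-- `A` is pinch concave: for any sequence of vertices of `A`, if removing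
all of them from `A` strictly decreases the boundary, then removing some proper
initial segment strictly increases the boundary. -/
def PinchConcave (w : V → V → ℝ) (A : Finset V) : Prop :=
  ∀ L : List V, (∀ x ∈ L, x ∈ A) →
    boundarySize w (A \ L.toFinset) < boundarySize w A →
    ∃ k < L.length, boundarySize w A < boundarySize w (A \ (L.take k).toFinset)

/-- `A` is a pinch cluster: whenever adding a sequence of vertices to `A`, or
removing a sequence of vertices from `A`, strictly decreases the boundary, some
proper initial segment of the sequence strictly increases the boundary. -/
def PinchCluster (w : V → V → ℝ) (A : Finset V) : Prop :=
  (∀ L : List V,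
    boundarySize w (A ∪ L.toFinset) < boundarySize w A →
    ∃ k < L.length, boundarySize w A < boundarySize w (A ∪ (L.take k).toFinset)) ∧
  (∀ L : List V,
    boundarySize w (A \ L.toFinset) < boundarySize w A →
    ∃ k < L.length, boundarySize w A < boundarySize w (A \ (L.take k).toFinset))

/-!
Let `A = B ∩ C` and let `L` be a sequence of vertices outside `A` whose proper prefixes never
raise `|∂A|` while the whole of it lowers `|∂A|`. Cut `L` after the first vertex `v` at which
`|∂A|` drops: before `v` every prefix leaves `|∂A|` unchanged, and `v ∉ B`, say. The boundary is
submodular (the slope of a vertex decreases as the set grows), so a vertex that does not raise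
the boundary of `A ∪ S` does not raise that of `B ∪ S` either, and `v ∉ B` lowers `|∂B|` at least
as much as it lowers `|∂A|`. Hence the cut sequence, with its vertices in `B` discarded, lowers
`|∂B|` although none of its proper prefixes raises it, contradicting pinch convexity of `B`.
-/

theorem List.toFinset_take_add_one {α : Type*} [DecidableEq α] {l : List α} {i : ℕ}
    (h : i < l.length) : (l.take (i + 1)).toFinset = insert l[i] (l.take i).toFinset := by
  rw [List.take_succ_eq_append_getElem h, List.toFinset_append, List.toFinset_cons,
    List.toFinset_nil, insert_empty, union_comm, Finset.insert_eq]

theorem List.exists_take_filter_eq {α : Type*} (p : α → Bool) (l : List α) (k : ℕ)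
    (hk : k < (l.filter p).length) : ∃ i < l.length, (l.filter p).take k = (l.take i).filter p := by
  induction l generalizing k with
  | nil => simp at hk
  | cons a t ih =>
    by_cases hpa : p a
    · rcases k with _ | k
      · exact ⟨0, by simp, by simp⟩
      · obtain ⟨i, hi, heq⟩ := ih k (by simpa [List.filter_cons, hpa] using hk)
        exact ⟨i + 1, by simpa using hi, by simp [hpa, heq]⟩
    · obtain ⟨i, hi, heq⟩ := ih k (by simpa [List.filter_cons, hpa] using hk)
      exact ⟨i + 1, by simpa using hi, by simp [hpa, heq]⟩

theorem exists_forall_le_eq_and_lt_succ {α : Type*} [LinearOrder α] {f : ℕ → α} {c : α}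
    {n : ℕ} (h0 : c ≤ f 0) (hle : ∀ i < n, f i ≤ c) (hn : f n < c) :
    ∃ j < n, (∀ i ≤ j, f i = c) ∧ f (j + 1) < c := by
  classical
  have hex : ∃ m, f m < c := ⟨n, hn⟩
  have hfind_pos : Nat.find hex ≠ 0 := fun h => (Nat.find_spec hex).not_ge (h ▸ h0)
  have hfind_le : Nat.find hex ≤ n := Nat.find_min' hex hn
  refine ⟨Nat.find hex - 1, by omega, fun i hi => ?_, ?_⟩
  · exact le_antisymm (hle i (by omega)) (not_lt.1 (Nat.find_min hex (by omega)))
  · rw [Nat.sub_add_cancel (Nat.pos_of_ne_zero hfind_pos)]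
    exact Nat.find_spec hex

section Boundary

variable {w : V → V → ℝ} {X Y : Finset V}

theorem boundarySize_insert (hsym : ∀ u v, w u v = w v u)
    (hdiag : ∀ v, w v v = 0) {S : Finset V} {v : V} (hv : v ∉ S) :
    boundarySize w (insert v S) = boundarySize w S + pinchSlope w S v := by
  unfold boundarySize pinchSlope
  rw [sum_insert hv, compl_insert, sum_erase _ (hdiag v)]
  have hvc : v ∈ Sᶜ := mem_compl.2 hv
  rw [sum_congr rfl fun u _ => sum_erase_eq_sub hvc, sum_sub_distrib,
    sum_congr rfl fun u _ => hsym u v]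
  ring

theorem pinchSlope_antitone (hw0 : ∀ u v, 0 ≤ w u v) (v : V) :
    Antitone fun A => pinchSlope w A v := by
  intro A A' hAA'
  have hcompl : ∑ x ∈ A'ᶜ, w v x ≤ ∑ x ∈ Aᶜ, w v x :=
    sum_le_sum_of_subset_of_nonneg (compl_subset_compl.2 hAA') fun x _ _ => hw0 v x
  have hset : ∑ x ∈ A, w v x ≤ ∑ x ∈ A', w v x :=
    sum_le_sum_of_subset_of_nonneg hAA' fun x _ _ => hw0 v x
  simp only [pinchSlope]
  linarith

theorem boundarySize_insert_sub_le (hw0 : ∀ u v, 0 ≤ w u v) (hsym : ∀ u v, w u v = w v u)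
    (hdiag : ∀ v, w v v = 0) (hXY : X ⊆ Y) {v : V} (hv : v ∉ Y) :
    boundarySize w (insert v Y) - boundarySize w Y ≤
      boundarySize w (insert v X) - boundarySize w X := by
  rw [boundarySize_insert hsym hdiag hv, boundarySize_insert hsym hdiag fun h => hv (hXY h)]
  linarith [pinchSlope_antitone hw0 v hXY]

theorem boundarySize_insert_le_of_subset (hw0 : ∀ u v, 0 ≤ w u v)
    (hsym : ∀ u v, w u v = w v u) (hdiag : ∀ v, w v v = 0) (hXY : X ⊆ Y) {v : V}
    (hX : boundarySize w (insert v X) ≤ boundarySize w X) :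
    boundarySize w (insert v Y) ≤ boundarySize w Y := by
  by_cases hv : v ∈ Y
  · rw [insert_eq_of_mem hv]
  · linarith [boundarySize_insert_sub_le hw0 hsym hdiag hXY hv]

theorem boundarySize_union_take_le (hw0 : ∀ u v, 0 ≤ w u v)
    (hsym : ∀ u v, w u v = w v u) (hdiag : ∀ v, w v v = 0) (hXY : X ⊆ Y) (S : List V)
    (hflat : ∀ i ≤ S.length, boundarySize w (X ∪ (S.take i).toFinset) = boundarySize w X) :
    ∀ i ≤ S.length, boundarySize w (Y ∪ (S.take i).toFinset) ≤ boundarySize w Y := by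
  intro i hi
  induction i with
  | zero => simp
  | succ n ih =>
    have hn : n < S.length := hi
    have htake : ∀ Z : Finset V, Z ∪ (S.take (n + 1)).toFinset =
        insert S[n] (Z ∪ (S.take n).toFinset) := fun Z => by
      rw [List.toFinset_take_add_one hn, union_insert]
    have hstep := boundarySize_insert_le_of_subset hw0 hsym hdiag
      (union_subset_union_left hXY (t := (S.take n).toFinset)) (v := S[n])
      (by rw [← htake, hflat _ hi, hflat _ hn.le])
    rw [htake]
    linarith [ih hn.le]

theorem PinchConvex.exists_lt_boundarySize_take (hY : PinchConvex w Y) (L : List V)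
    (hL : boundarySize w (Y ∪ L.toFinset) < boundarySize w Y) :
    ∃ i < L.length, boundarySize w Y < boundarySize w (Y ∪ (L.take i).toFinset) := by
  have hunion : ∀ l : List V, Y ∪ (l.filter (· ∉ Y)).toFinset = Y ∪ l.toFinset := fun l => by
    ext
    simp only [mem_union, List.mem_toFinset, List.mem_filter, decide_eq_true_eq]
    tauto
  obtain ⟨k, hk, hgt⟩ := hY (L.filter (· ∉ Y))
    (fun x hx => by simpa using (List.mem_filter.1 hx).2) (by rwa [hunion])
  obtain ⟨i, hi, heq⟩ := List.exists_take_filter_eq _ L k hk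
  exact ⟨i, hi, by rwa [heq, hunion] at hgt⟩

theorem PinchConvex.boundarySize_le_of_flat (hw0 : ∀ u v, 0 ≤ w u v)
    (hsym : ∀ u v, w u v = w v u) (hdiag : ∀ v, w v v = 0)
    (hY : PinchConvex w Y) (hXY : X ⊆ Y) (S : List V) {v : V} (hv : v ∉ Y)
    (hflat : ∀ i ≤ S.length, boundarySize w (X ∪ (S.take i).toFinset) = boundarySize w X) :
    boundarySize w X ≤ boundarySize w (X ∪ (S ++ [v]).toFinset) := by
  by_contra! hlt
  have hSY := boundarySize_union_take_le hw0 hsym hdiag hXY S hflat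
  have hXS := hflat S.length le_rfl
  have hYS := hSY S.length le_rfl
  rw [List.take_length] at hXS hYS
  have happend : ∀ Z : Finset V, Z ∪ (S ++ [v]).toFinset = insert v (Z ∪ S.toFinset) := by
    intro Z
    rw [List.toFinset_append, List.toFinset_cons, List.toFinset_nil, insert_empty, ← union_assoc,
      union_comm, ← insert_eq]
  have hvS : v ∉ Y ∪ S.toFinset := by
    intro hmem
    have hvS : v ∈ X ∪ S.toFinset := mem_union_right _ ((mem_union.1 hmem).resolve_left hv)
    rw [happend, insert_eq_of_mem hvS] at hlt
    exact hlt.ne hXS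
  have hYlt : boundarySize w (Y ∪ (S ++ [v]).toFinset) < boundarySize w Y := by
    rw [happend] at hlt ⊢
    linarith [boundarySize_insert_sub_le hw0 hsym hdiag (union_subset_union_left hXY) hvS]
  obtain ⟨i, hi, hgt⟩ := hY.exists_lt_boundarySize_take _ hYlt
  have hiS : i ≤ S.length := by simpa [Nat.lt_succ_iff] using hi
  rw [List.take_append_of_le_length hiS] at hgt
  linarith [hSY i hiS]

end Boundary

/-- The intersection of two pinch convex vertex sets is pinch convex. -/
theorem pinchConvex_inter (w : V → V → ℝ)
    (hw0 : ∀ u v, 0 ≤ w u v) (hsym : ∀ u v, w u v = w v u)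
    (hdiag : ∀ v, w v v = 0) (B C : Finset V)
    (hB : PinchConvex w B) (hC : PinchConvex w C) :
    PinchConvex w (B ∩ C) := by
  intro L hL hlt
  by_contra! hle
  obtain ⟨j, hj, hflat, hdrop⟩ := exists_forall_le_eq_and_lt_succ
    (f := fun i => boundarySize w (B ∩ C ∪ (L.take i).toFinset)) (by simp) hle
    (by simpa using hlt)
  have hflat' : ∀ i ≤ (L.take j).length,
      boundarySize w (B ∩ C ∪ ((L.take j).take i).toFinset) = boundarySize w (B ∩ C) := by
    intro i hi
    have hij : i ≤ j := hi.trans (List.length_take_le _ _)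
    rw [List.take_take, min_eq_left hij]
    exact hflat i hij
  rw [List.take_succ_eq_append_getElem hj] at hdrop
  have hv : L[j] ∉ B ∨ L[j] ∉ C := not_and_or.1 (by simpa using hL _ (List.getElem_mem hj))
  rcases hv with hvB | hvC
  · exact (hB.boundarySize_le_of_flat hw0 hsym hdiag inter_subset_left _ hvB hflat').not_gt hdrop
  · exact (hC.boundarySize_le_of_flat hw0 hsym hdiag inter_subset_right _ hvC hflat').not_gt hdrop
end

section
/- If every vertex v of a set B has strictly negative slope with respect to B (i.e., the weight from v into B strictly exceeds the weight from v out of B), then B is pinch concave. -/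
open Finset

variable {V : Type*} [Fintype V] [DecidableEq V]

section

variable {w : V → V → ℝ} {B : Finset V}

lemma boundarySize_erase (hsym : ∀ u v, w u v = w v u) (hdiag : ∀ v, w v v = 0)
    {v : V} (hv : v ∈ B) :
    boundarySize w (B.erase v) = boundarySize w B - pinchSlope w B v := by
  have hB : boundarySize w B = ∑ u ∈ B.erase v, ∑ x ∈ Bᶜ, w u x + ∑ x ∈ Bᶜ, w v x := by
    rw [boundarySize, ← add_sum_erase _ _ hv, add_comm]
  have hslope : ∑ x ∈ B, w v x = ∑ u ∈ B.erase v, w u v := by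
    rw [← add_sum_erase _ _ hv, hdiag, zero_add]
    exact sum_congr rfl fun u _ => hsym v u
  have hinsert : ∀ u ∈ B.erase v, ∑ x ∈ insert v Bᶜ, w u x = w u v + ∑ x ∈ Bᶜ, w u x :=
    fun u _ => sum_insert (by simpa using hv)
  rw [boundarySize, compl_erase, sum_congr rfl hinsert, sum_add_distrib, hB, pinchSlope, hslope]
  ring

/-- The initial segment of length one is always a witness, except for a sequence of length one,
which by hypothesis cannot decrease the boundary. -/
lemma pinchConcave_of_forall_boundarySize_lt_erase
    (h : ∀ v ∈ B, boundarySize w B < boundarySize w (B.erase v)) : PinchConcave w B := by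
  rintro (_ | ⟨a, _ | ⟨b, rest⟩⟩) hL hdec
  · simp at hdec
  · have := h a (hL a (by simp))
    simp only [List.toFinset_cons, List.toFinset_nil, insert_empty_eq,
      sdiff_singleton_eq_erase] at hdec
    exact absurd hdec this.not_gt
  · exact ⟨1, by simp, by simpa [sdiff_singleton_eq_erase] using h a (hL a (by simp))⟩

end

theorem pinchConcave_of_neg_slopes_general (w : V → V → ℝ)
    (hsym : ∀ u v, w u v = w v u)
    (hdiag : ∀ v, w v v = 0) (B : Finset V)
    (hneg : ∀ v ∈ B, pinchSlope w B v < 0) :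
    PinchConcave w B :=
  pinchConcave_of_forall_boundarySize_lt_erase fun v hv => by
    rw [boundarySize_erase hsym hdiag hv]
    linarith [hneg v hv]

/-- If every vertex of `B` has strictly negative pinchSlope with respect to `B`,
then `B` is pinch concave. -/
theorem pinchConcave_of_neg_slopes (w : V → V → ℝ)
    (hw0 : ∀ u v, 0 ≤ w u v) (hsym : ∀ u v, w u v = w v u)
    (hdiag : ∀ v, w v v = 0) (B : Finset V)
    (hneg : ∀ v ∈ B, pinchSlope w B v < 0) :
    PinchConcave w B :=
  pinchConcave_of_neg_slopes_general w hsym hdiag B hneg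
end

section
/- If B is pinch convex and B¹ = B \ {v₀} where v₀ has maximal slope among vertices of B and s_B(v₀) ≥ 0, then B¹ is pinch convex. -/
open Finset

variable {V : Type*} [Fintype V] [DecidableEq V]

set_option linter.unusedSectionVars false
set_option linter.unusedVariables false

lemma boundary_insert (w : V → V → ℝ) (hsym : ∀ u v, w u v = w v u)
    (hdiag : ∀ v, w v v = 0) (A : Finset V) (v : V) (hv : v ∉ A) :
    boundarySize w (insert v A) = boundarySize w A + pinchSlope w A v := by
  have hvc : v ∈ Aᶜ := Finset.mem_compl.2 hv
  unfold boundarySize pinchSlope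
  rw [Finset.sum_insert hv, Finset.compl_insert, Finset.sum_erase_eq_sub hvc]
  have h : ∀ u ∈ A, ∑ x ∈ Aᶜ.erase v, w u x = ∑ x ∈ Aᶜ, w u x - w u v :=
    fun u _ => Finset.sum_erase_eq_sub hvc
  rw [Finset.sum_congr rfl h, Finset.sum_sub_distrib]
  have hswap : ∑ u ∈ A, w u v = ∑ u ∈ A, w v u :=
    Finset.sum_congr rfl (fun u _ => hsym u v)
  rw [hdiag v, hswap]
  ring

lemma pinchSlope_anti (w : V → V → ℝ) (hw0 : ∀ u v, 0 ≤ w u v)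
    {A A' : Finset V} (h : A ⊆ A') (v : V) :
    pinchSlope w A' v ≤ pinchSlope w A v := by
  unfold pinchSlope
  have h1 : ∑ x ∈ A'ᶜ, w v x ≤ ∑ x ∈ Aᶜ, w v x :=
    Finset.sum_le_sum_of_subset_of_nonneg (Finset.compl_subset_compl.2 h)
      (fun i _ _ => hw0 v i)
  have h2 : ∑ x ∈ A, w v x ≤ ∑ x ∈ A', w v x :=
    Finset.sum_le_sum_of_subset_of_nonneg h (fun i _ _ => hw0 v i)
  linarith

lemma take_filter_exists (q : V → Bool) (L : List V) :
    ∀ (k : ℕ), ∃ p, (L.take p).filter q = (L.filter q).take k ∧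
      (k < (L.filter q).length → p < L.length) := by
  induction L with
  | nil => intro k; exact ⟨0, by simp, by simp⟩
  | cons a L ih =>
    intro k
    by_cases hq : q a
    · match k with
      | 0 => exact ⟨0, by simp, fun _ => Nat.succ_pos _⟩
      | k + 1 =>
        obtain ⟨p, h1, h2⟩ := ih k
        refine ⟨p + 1, ?_, ?_⟩
        · simp [List.filter_cons, hq, h1]
        · intro hk
          simp only [List.filter_cons, hq, if_true, List.length_cons] at hk
          have := h2 (by omega)
          simp only [List.length_cons]
          omega
    · obtain ⟨p, h1, h2⟩ := ih k
      refine ⟨p + 1, ?_, ?_⟩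
      · simp [List.filter_cons, hq, h1]
      · intro hk
        simp only [List.filter_cons, hq] at hk
        have := h2 (by simpa using hk)
        simp only [List.length_cons]
        omega

lemma union_filter_eq (B : Finset V) (l : List V) :
    B ∪ (l.filter (fun x => decide (x ∉ B))).toFinset = B ∪ l.toFinset := by
  ext a
  simp only [Finset.mem_union, List.mem_toFinset, List.mem_filter, decide_eq_true_iff]
  constructor
  · rintro (h | ⟨h, _⟩) <;> tauto
  · rintro (h | h)
    · tauto
    · by_cases hB : a ∈ B <;> tauto


/-- If `B` is pinch convex and `v₀ ∈ B` has maximal pinchSlope among the vertices of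
`B`, with `s_B(v₀) ≥ 0`, then `B \ {v₀}` is pinch convex. -/
theorem pinchConvex_erase_max_slope (w : V → V → ℝ)
    (hw0 : ∀ u v, 0 ≤ w u v) (hsym : ∀ u v, w u v = w v u)
    (hdiag : ∀ v, w v v = 0) (B : Finset V) (hB : PinchConvex w B)
    (v₀ : V) (hv₀ : v₀ ∈ B) (hnn : 0 ≤ pinchSlope w B v₀)
    (hmax : ∀ u ∈ B, pinchSlope w B u ≤ pinchSlope w B v₀) :
    PinchConvex w (B.erase v₀) := by
  intro L hL hlt
  set B1 := B.erase v₀ with hB1def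
  have hB1sub : B1 ⊆ B := Finset.erase_subset _ _
  have hv₀B1 : v₀ ∉ B1 := Finset.notMem_erase _ _
  have hins : insert v₀ B1 = B := Finset.insert_erase hv₀
  set s1 := pinchSlope w B1 v₀ with hs1def
  have hs1nn : 0 ≤ s1 := le_trans hnn (pinchSlope_anti w hw0 hB1sub v₀)
  have hBb : boundarySize w B = boundarySize w B1 + s1 := by
    rw [← hins]; exact boundary_insert w hsym hdiag B1 v₀ hv₀B1
  set q : V → Bool := fun x => decide (x ∉ B) with hqdef
  set M : List V := L.filter q with hMdef
  have hM : ∀ x ∈ M, x ∉ B := by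
    intro x hx
    rw [hMdef, List.mem_filter] at hx
    exact of_decide_eq_true hx.2
  have hBU : ∀ S : Finset V, B ∪ S = insert v₀ (B1 ∪ S) := by
    intro S; rw [← hins, Finset.insert_union]
  have hlt' : boundarySize w (B ∪ M.toFinset) < boundarySize w B := by
    rw [hMdef, union_filter_eq B L, hBU]
    by_cases hmem : v₀ ∈ B1 ∪ L.toFinset
    · rw [Finset.insert_eq_self.2 hmem]
      calc boundarySize w (B1 ∪ L.toFinset) < boundarySize w B1 := hlt
        _ ≤ boundarySize w B := by linarith [hBb]
    · rw [boundary_insert w hsym hdiag _ v₀ hmem]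
      have hmono : pinchSlope w (B1 ∪ L.toFinset) v₀ ≤ s1 :=
        pinchSlope_anti w hw0 Finset.subset_union_left v₀
      linarith [hBb]
  obtain ⟨k, hk, hkgt⟩ := hB M hM hlt'
  obtain ⟨p, hp1, hp2⟩ := take_filter_exists q L k
  have hplt : p < L.length := hp2 (by rwa [← hMdef])
  refine ⟨p, hplt, ?_⟩
  have hTeq : B ∪ (M.take k).toFinset = B ∪ (L.take p).toFinset := by
    rw [hMdef, ← hp1, hqdef]
    exact (union_filter_eq B (L.take p)).symm ▸ union_filter_eq B (L.take p)
  set T := B1 ∪ (L.take p).toFinset with hTdef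
  have hkey : boundarySize w B < boundarySize w (insert v₀ T) := by
    rw [hTdef, ← hBU]
    rwa [hTeq] at hkgt
  by_cases hmem : v₀ ∈ T
  · rw [Finset.insert_eq_self.2 hmem] at hkey
    linarith [hBb]
  · rw [boundary_insert w hsym hdiag T v₀ hmem] at hkey
    have hmono : pinchSlope w T v₀ ≤ s1 :=
      pinchSlope_anti w hw0 Finset.subset_union_left v₀
    linarith [hBb]
end

section
/- If B_i contains a pinch cluster C with core C(A) = C' (every vertex of C' having strictly negative slope with respect to C'), then the greedy removal algorithm applied to B_i terminates with a non-empty pinch-concave set B′_i containing C'. -/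
open Finset

variable {V : Type*} [Fintype V] [DecidableEq V]

lemma slope_mono (w : V → V → ℝ) (hw0 : ∀ u v, 0 ≤ w u v)
    {C' D : Finset V} (h : C' ⊆ D) (v : V) :
    pinchSlope w D v ≤ pinchSlope w C' v := by
  unfold pinchSlope
  apply sub_le_sub
  · exact Finset.sum_le_sum_of_subset_of_nonneg (compl_subset_compl.mpr h)
      (fun x _ _ => hw0 v x)
  · exact Finset.sum_le_sum_of_subset_of_nonneg h (fun x _ _ => hw0 v x)

lemma boundary_erase (w : V → V → ℝ) (hsym : ∀ u v, w u v = w v u)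
    (hdiag : ∀ v, w v v = 0) {A : Finset V} {v : V} (hv : v ∈ A) :
    boundarySize w (A.erase v) = boundarySize w A - pinchSlope w A v := by
  unfold boundarySize pinchSlope
  have h1 : (A.erase v)ᶜ = insert v Aᶜ := by
    ext x
    simp only [Finset.mem_compl, Finset.mem_erase, Finset.mem_insert]
    tauto
  have hvA : v ∉ Aᶜ := by simp [hv]
  rw [h1, Finset.sum_congr rfl (fun u _ => Finset.sum_insert hvA),
    Finset.sum_add_distrib]
  have hA : ∑ u ∈ A, ∑ x ∈ Aᶜ, w u x
      = (∑ u ∈ A.erase v, ∑ x ∈ Aᶜ, w u x) + ∑ x ∈ Aᶜ, w v x := by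
    rw [← Finset.add_sum_erase _ _ hv]; ring
  have h2 : ∑ u ∈ A.erase v, w u v = ∑ x ∈ A, w v x := by
    rw [← Finset.add_sum_erase _ (fun x => w v x) hv, hdiag, zero_add]
    exact Finset.sum_congr rfl fun u _ => hsym u v
  rw [hA, h2]; ring

/-- Lemma (effective2lem): if the starting block `B 0` contains a pinch cluster
`C` whose core `C'` has all slopes strictly negative, then the greedy removal
algorithm (repeatedly removing a vertex of maximal nonnegative slope)
terminates with a non-empty pinch concave set `B ℓ` containing `C'`. -/
theorem greedy_contains_core (w : V → V → ℝ)
    (hw0 : ∀ u v, 0 ≤ w u v) (hsym : ∀ u v, w u v = w v u)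
    (hdiag : ∀ v, w v v = 0) (C C' : Finset V) (hC : PinchCluster w C)
    (hC'ne : C'.Nonempty) (hC'C : C' ⊆ C)
    (hcore : ∀ v ∈ C', pinchSlope w C' v < 0)
    (B : ℕ → Finset V) (ℓ : ℕ) (hCB : C ⊆ B 0)
    (hstep : ∀ t < ℓ, ∃ v ∈ B t, 0 ≤ pinchSlope w (B t) v ∧
      (∀ u ∈ B t, pinchSlope w (B t) u ≤ pinchSlope w (B t) v) ∧ B (t + 1) = (B t).erase v)
    (hterm : ∀ v ∈ B ℓ, pinchSlope w (B ℓ) v < 0) :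
    (B ℓ).Nonempty ∧ PinchConcave w (B ℓ) ∧ C' ⊆ B ℓ := by
  have hsub : ∀ t, t ≤ ℓ → C' ⊆ B t := by
    intro t
    induction t with
    | zero => intro _; exact hC'C.trans hCB
    | succ n ih =>
      intro hn
      have h1 : C' ⊆ B n := ih (Nat.le_of_succ_le hn)
      obtain ⟨v, hvB, hvs, _, hBe⟩ := hstep n (Nat.lt_of_succ_le hn)
      rw [hBe]
      intro x hx
      rw [Finset.mem_erase]
      refine ⟨?_, h1 hx⟩
      rintro rfl
      have := (slope_mono w hw0 h1 x).trans_lt (hcore x hx)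
      linarith
  have hBl : C' ⊆ B ℓ := hsub ℓ le_rfl
  refine ⟨hC'ne.mono hBl, ?_, hBl⟩
  intro L hL hdec
  match L with
  | [] => simp at hdec
  | [a] =>
    exfalso
    have ha : a ∈ B ℓ := hL a (by simp)
    have he : B ℓ \ [a].toFinset = (B ℓ).erase a := by
      simp [Finset.sdiff_singleton_eq_erase]
    rw [he, boundary_erase w hsym hdiag ha] at hdec
    have := hterm a ha
    linarith
  | a :: b :: rest =>
    refine ⟨1, by simp, ?_⟩
    have ha : a ∈ B ℓ := hL a (by simp)
    have he : B ℓ \ ((a :: b :: rest).take 1).toFinset = (B ℓ).erase a := by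
      simp [Finset.sdiff_singleton_eq_erase]
    rw [he, boundary_erase w hsym hdiag ha]
    have := hterm a ha
    linarith
end
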